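/- Let y be a regular non-degenerate n-simplex of a simplicial set X, and let μ, ν be face operators into [n] such that n lies in the image of μ or of ν. If the non-degenerate parts of y∘μ and y∘ν are equal, then μ = ν. -/

import Mathlib

open CategoryTheory GrothendieckTopology Simplicial Opposite Limits

namespace SSet

/-- Naturality of the Yoneda bijection for simplicial sets. -/
lemma yonedaEquiv_symm_naturality' {m n : SimplexCategory} (f : m ⟶ n) (X : SSet)
    (y : X.obj (op n)) :
    SSet.stdSimplex.map f ≫ (yonedaEquiv (X := X) (n := n)).symm y = (yonedaEquiv (X := X) (n := m)).symm (X.map f.op y) := by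
  ext k x
  show X.map (x.down ≫ f).op y = X.map x.down.op (X.map f.op y)
  rw [op_comp, FunctorToTypes.map_comp_apply]

variable (X : SSet)

/-- A simplex is degenerate if it is the image of a simplex of strictly lower degree
under a simplicial operator. -/
def Degenerate {n : ℕ} (y : X _⦋n⦌) : Prop :=
  ∃ (m : ℕ) (σ : (⦋n⦌ : SimplexCategory) ⟶ ⦋m⦌) (z : X _⦋m⦌), m < n ∧ y = X.map σ.op z

/-- A simplex is non-degenerate if it is not degenerate. -/
def Nondegenerate {n : ℕ} (y : X _⦋n⦌) : Prop := ¬ X.Degenerate y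

/-- The representing map `Δ[n] ⟶ X` of the `(n+1)`-st face `y ∘ δₙ₊₁` of an
`(n+1)`-simplex `y` of `X`. -/
noncomputable def lastFaceMap {n : ℕ} (y : X _⦋n+1⦌) : Δ[n] ⟶ X :=
  (yonedaEquiv (X := X) (n := ⦋n⦌)).symm (X.map (SimplexCategory.δ (Fin.last (n+1))).op y)

/-- The canonical map `Δ[n+1] ⊔_{Δ[n]} Y' ⟶ X`, where `Y'` is the simplicial subset of `X`
generated by the last face of `y` (i.e. the image of the representing map of that face). -/
noncomputable def regularityMap {n : ℕ} (y : X _⦋n+1⦌) :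
    pushout (C := SSet.{u_1}) (SSet.stdSimplex.map (SimplexCategory.δ (Fin.last (n+1))))
      (Subfunctor.toRange (X.lastFaceMap y)) ⟶ X :=
  pushout.desc ((yonedaEquiv (X := X) (n := ⦋n+1⦌)).symm y) (Subfunctor.range (X.lastFaceMap y)).ι
    (by rw [yonedaEquiv_symm_naturality']; exact (Subfunctor.toRange_ι _).symm)

/-- A simplicial set is regular if, for each of its non-degenerate simplices `y`,
the canonical map from the pushout `Δ[n+1] ⊔_{Δ[n]} Y'` to `X` is degreewise injective. -/
def IsRegular : Prop :=
  ∀ (n : ℕ) (y : X _⦋n+1⦌), X.Nondegenerate y →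
    ∀ (k : SimplexCategoryᵒᵖ), Function.Injective ((X.regularityMap y).app k)

end SSet

/-!
The pushout `Δ[n+1] ⊔_{Δ[n]} Y'` glues `Δ[n+1]` to `Y'` only along the last face, so by
regularity `y ∘ σ = y ∘ τ` forces `σ = τ` whenever `σ` hits the last vertex (such a `σ` does
not factor through `δₙ₊₁`). Say `μ` hits the last vertex, and let `s` be a section of the
surjection `α`. Then `z = y ∘ (s ≫ μ)`, so `y ∘ μ = y ∘ (α ≫ s ≫ μ)` and hence `α ≫ s = 𝟙`:
`α` is an isomorphism. Next `y ∘ ν = y ∘ (β ≫ s ≫ μ)`, and `β ≫ s ≫ μ` hits the last vertex,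
so `ν = (β ≫ s) ≫ μ`; then `β ≫ s` is injective and surjective, i.e. the identity.
-/

namespace CategoryTheory.Limits.Types

universe u

variable {S X₁ X₂ : Type u} {f : S ⟶ X₁} {g : S ⟶ X₂}

lemma pushoutCocone_inl_eq_inl_of_isColimit {c : PushoutCocone f g} (hc : IsColimit c)
    (hf : Function.Injective f) {x₁ y₁ : X₁} (hx₁ : x₁ ∉ Set.range f)
    (h : c.inl x₁ = c.inl y₁) : x₁ = y₁ := by
  have : Mono f := (mono_iff_injective f).2 hf
  let e : c ≅ Pushout.cocone f g :=
    Cocone.ext (hc.coconePointUniqueUpToIso (Pushout.isColimitCocone f g)) (by aesop_cat)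
  have he : ∀ x, e.hom.hom (c.inl x) = Pushout.inl f g x := fun x =>
    ConcreteCategory.congr_hom (e.hom.w WalkingSpan.left) x
  have hrel := (Pushout.quot_mk_eq_iff f g (Sum.inl x₁) (Sum.inl y₁)).1
    ((he x₁).symm.trans ((congrArg e.hom.hom h).trans (he y₁)))
  rw [Pushout.inl_rel'_inl_iff] at hrel
  obtain h₁ | ⟨s, _, _, rfl, _⟩ := hrel
  · exact h₁
  · exact absurd ⟨s, rfl⟩ hx₁

end CategoryTheory.Limits.Types

namespace SimplexCategory

lemma sigma_mk_comp_eq_of_mono_of_epi {k l : ℕ} {n : SimplexCategory}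
    (β : (⦋l⦌ : SimplexCategory) ⟶ ⦋k⦌) [Mono β] [Epi β] (μ : ⦋k⦌ ⟶ n) :
    (⟨l, β ≫ μ⟩ : Σ k : ℕ, ((⦋k⦌ : SimplexCategory) ⟶ n)) = ⟨k, μ⟩ := by
  obtain rfl : l = k := le_antisymm
    (by simpa using len_le_of_mono β) (by simpa using len_le_of_epi β)
  rw [eq_id_of_epi β, Category.id_comp]

end SimplexCategory

namespace SSet

open SimplexCategory

universe u

variable {X : SSet.{u}} {n : ℕ} {y : X _⦋n + 1⦌}

lemma regularityMap_app_inl {m : SimplexCategory} (σ : m ⟶ ⦋n + 1⦌) :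
    (X.regularityMap y).app (op m)
      ((pushout.inl (SSet.stdSimplex.{u}.map (δ (Fin.last (n + 1))))
        (Subfunctor.toRange (X.lastFaceMap y))).app (op m) (SSet.stdSimplex.objEquiv.{u}.symm σ)) =
      X.map σ.op y := by
  rw [regularityMap, ← NatTrans.comp_app_apply, pushout.inl_desc]
  rfl

lemma last_notMem_range_comp_δ_last {m : SimplexCategory} (ρ : m ⟶ ⦋n⦌) :
    Fin.last (n + 1) ∉ Set.range (ρ ≫ δ (Fin.last (n + 1))).toOrderHom := by
  rintro ⟨j, hj⟩
  exact Fin.succAbove_ne (Fin.last (n + 1)) (ρ.toOrderHom j) hj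

lemma eq_of_map_eq_of_last_mem_range
    (hreg : ∀ k, Function.Injective ((X.regularityMap y).app k))
    {m : SimplexCategory} {σ τ : m ⟶ ⦋n + 1⦌}
    (hσ : Fin.last (n + 1) ∈ Set.range σ.toOrderHom) (h : X.map σ.op y = X.map τ.op y) :
    σ = τ := by
  have hδ : Function.Injective
      ((SSet.stdSimplex.{u}.map (δ (Fin.last (n + 1)))).app (op m)) := by
    rw [← CategoryTheory.mono_iff_injective]
    exact (NatTrans.mono_iff_mono_app _).1 (inferInstanceAs (Mono (SSet.stdSimplex.δ _))) _
  have hσ' : SSet.stdSimplex.objEquiv.{u}.symm σ ∉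
      Set.range ((SSet.stdSimplex.{u}.map (δ (Fin.last (n + 1)))).app (op m)) := by
    rintro ⟨ρ, hρ⟩
    obtain rfl : SSet.stdSimplex.objEquiv.{u} ρ ≫ δ (Fin.last (n + 1)) = σ := congrArg ULift.down hρ
    exact last_notMem_range_comp_δ_last _ hσ
  have hcolim := isColimitOfHasPushoutOfPreservesColimit ((evaluation _ _).obj (op m))
    (SSet.stdSimplex.{u}.map (δ (Fin.last (n + 1)))) (Subfunctor.toRange (X.lastFaceMap y))
  refine SSet.stdSimplex.objEquiv.{u}.symm.injective
    (Limits.Types.pushoutCocone_inl_eq_inl_of_isColimit hcolim hδ hσ' ?_)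
  exact hreg (op m) ((regularityMap_app_inl σ).trans (h.trans (regularityMap_app_inl τ).symm))

lemma sigma_mk_eq_of_map_eq_map_epi
    (hreg : ∀ k, Function.Injective ((X.regularityMap y).app k))
    {k l m : ℕ} {μ : (⦋k⦌ : SimplexCategory) ⟶ ⦋n + 1⦌} {ν : (⦋l⦌ : SimplexCategory) ⟶ ⦋n + 1⦌}
    [Mono μ] [Mono ν] (hμ : Fin.last (n + 1) ∈ Set.range μ.toOrderHom)
    {z : X _⦋m⦌} {α : (⦋k⦌ : SimplexCategory) ⟶ ⦋m⦌} {β : (⦋l⦌ : SimplexCategory) ⟶ ⦋m⦌}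
    [Epi α] [Epi β] (hα : X.map μ.op y = X.map α.op z) (hβ : X.map ν.op y = X.map β.op z) :
    (⟨k, μ⟩ : Σ k : ℕ, ((⦋k⦌ : SimplexCategory) ⟶ ⦋n + 1⦌)) = ⟨l, ν⟩ := by
  have : IsSplitEpi α := isSplitEpi_of_epi α
  set s := section_ α
  have hz : z = X.map (s ≫ μ).op y := by
    rw [op_comp, Functor.map_comp_apply, hα, ← Functor.map_comp_apply, ← op_comp,
      IsSplitEpi.id, op_id, Functor.map_id_apply]
  have hαs : α ≫ s = 𝟙 _ := by
    refine (cancel_mono μ).1 (Eq.symm (eq_of_map_eq_of_last_mem_range hreg hμ ?_))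
    rw [Category.id_comp, Category.assoc, op_comp, Functor.map_comp_apply, ← hz, hα]
  have : Epi s := (IsSplitEpi.mk' ⟨α, hαs⟩).epi
  have hν : (β ≫ s) ≫ μ = ν := by
    refine eq_of_map_eq_of_last_mem_range hreg ?_ ?_
    · obtain ⟨j, hj⟩ := hμ
      obtain ⟨i, rfl⟩ := epi_iff_surjective.1 (inferInstance : Epi (β ≫ s)) j
      exact ⟨i, hj⟩
    · rw [Category.assoc, op_comp, Functor.map_comp_apply, ← hz, hβ]
  have : Mono (β ≫ s) := by
    have : Mono ((β ≫ s) ≫ μ) := hν ▸ inferInstance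
    exact mono_of_mono _ μ
  rw [← hν, sigma_mk_comp_eq_of_mono_of_epi]

end SSet

open SimplexCategory

theorem face_operators_eq_of_nondeg_part_eq_general
    (X : SSet) {n : ℕ} (y : X _⦋n + 1⦌)
    (hreg : ∀ k, Function.Injective ((X.regularityMap y).app k))
    {k l : ℕ} (μ : (⦋k⦌ : SimplexCategory) ⟶ ⦋n + 1⦌) (ν : (⦋l⦌ : SimplexCategory) ⟶ ⦋n + 1⦌)
    (hμ : Mono μ) (hν : Mono ν)
    (hlast : Fin.last (n + 1) ∈ Set.range μ.toOrderHom ∨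
      Fin.last (n + 1) ∈ Set.range ν.toOrderHom)
    (hsharp : ∃ (m : ℕ) (z : X _⦋m⦌) (α : (⦋k⦌ : SimplexCategory) ⟶ ⦋m⦌)
      (β : (⦋l⦌ : SimplexCategory) ⟶ ⦋m⦌), Epi α ∧ Epi β ∧ X.Nondegenerate z ∧
        X.map μ.op y = X.map α.op z ∧ X.map ν.op y = X.map β.op z) :
    (⟨k, μ⟩ : Σ k : ℕ, ((⦋k⦌ : SimplexCategory) ⟶ ⦋n + 1⦌)) = ⟨l, ν⟩ := by
  obtain ⟨m, z, α, β, hα, hβ, -, hμα, hνβ⟩ := hsharp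
  rcases hlast with hlast | hlast
  · exact SSet.sigma_mk_eq_of_map_eq_map_epi hreg hlast hμα hνβ
  · exact (SSet.sigma_mk_eq_of_map_eq_map_epi hreg hlast hνβ hμα).symm

/-- Let `y` be a regular non-degenerate `(n+1)`-simplex of a simplicial set `X`, and let
`μ`, `ν` be face operators into `[n+1]` such that the last vertex lies in the image of `μ`
or of `ν`. If `y ∘ μ` and `y ∘ ν` have the same non-degenerate part, then `μ = ν`. -/
theorem face_operators_eq_of_nondeg_part_eq
    (X : SSet) {n : ℕ} (y : X _⦋n + 1⦌) (hy : X.Nondegenerate y)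
    (hreg : ∀ k, Function.Injective ((X.regularityMap y).app k))
    {k l : ℕ} (μ : (⦋k⦌ : SimplexCategory) ⟶ ⦋n + 1⦌) (ν : (⦋l⦌ : SimplexCategory) ⟶ ⦋n + 1⦌)
    (hμ : Mono μ) (hν : Mono ν)
    (hlast : Fin.last (n + 1) ∈ Set.range μ.toOrderHom ∨
      Fin.last (n + 1) ∈ Set.range ν.toOrderHom)
    (hsharp : ∃ (m : ℕ) (z : X _⦋m⦌) (α : (⦋k⦌ : SimplexCategory) ⟶ ⦋m⦌)
      (β : (⦋l⦌ : SimplexCategory) ⟶ ⦋m⦌), Epi α ∧ Epi β ∧ X.Nondegenerate z ∧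
        X.map μ.op y = X.map α.op z ∧ X.map ν.op y = X.map β.op z) :
    (⟨k, μ⟩ : Σ k : ℕ, ((⦋k⦌ : SimplexCategory) ⟶ ⦋n + 1⦌)) = ⟨l, ν⟩ :=
  face_operators_eq_of_nondeg_part_eq_general X y hreg μ ν hμ hν hlast hsharp
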